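/- arXiv:2503.22400 — 2 statements merged into one kernel-verified Lean document; each statement's English description precedes it below -/
import Mathlib

section
/- Let M₁, M₂ be unitary operators on a finite-dimensional Hilbert space H with M_i^d = 1 and M₁M₂ = ω^{-1} M₂M₁ for prime d. Then dim H is a multiple of d, and there exists a unitary U: H → ℂ^d ⊗ H' with U M₁ U† = X ⊗ 1 and U M₂ U† = Z ⊗ 1. -/
open Matrix Complex Kronecker

lemma exists_factor {n : ℕ} (P : Matrix (Fin n) (Fin n) ℂ) (hP : P.IsHermitian)
    (hP2 : P * P = P) :
    ∃ (m : ℕ) (W : Matrix (Fin n) (Fin m) ℂ),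
      Wᴴ * W = 1 ∧ W * Wᴴ = P ∧ P.trace = m := by
  classical
  set V : Matrix (Fin n) (Fin n) ℂ := (hP.eigenvectorUnitary : Matrix (Fin n) (Fin n) ℂ) with hV
  set ev : Fin n → ℝ := hP.eigenvalues with hev
  have hVu : V ∈ Matrix.unitaryGroup (Fin n) ℂ := hP.eigenvectorUnitary.2
  have hVV : Vᴴ * V = 1 := by
    have := hVu.1
    rwa [Matrix.star_eq_conjTranspose] at this
  have hVV' : V * Vᴴ = 1 := by
    have := hVu.2
    rwa [Matrix.star_eq_conjTranspose] at this
  have hdiag : Vᴴ * P * V = Matrix.diagonal (Complex.ofReal ∘ ev) := by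
    have h := hP.spectral_theorem
    rw [Unitary.conjStarAlgAut_apply, Matrix.star_eq_conjTranspose, ← hV] at h
    rw [h, ← Matrix.mul_assoc, ← Matrix.mul_assoc, hVV, Matrix.one_mul, Matrix.mul_assoc, hVV,
      Matrix.mul_one]
    rfl
  have hspec : P = V * Matrix.diagonal (Complex.ofReal ∘ ev) * Vᴴ := by
    have := hP.spectral_theorem
    rwa [Unitary.conjStarAlgAut_apply, Matrix.star_eq_conjTranspose] at this
  have hcancel : ∀ X : Matrix (Fin n) (Fin n) ℂ, V * (Vᴴ * X) = X := fun X => by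
    rw [← Matrix.mul_assoc, hVV', Matrix.one_mul]
  have hDD : Matrix.diagonal (Complex.ofReal ∘ ev) * Matrix.diagonal (Complex.ofReal ∘ ev)
      = Matrix.diagonal (Complex.ofReal ∘ ev) := by
    have : (Vᴴ * P * V) * (Vᴴ * P * V) = Vᴴ * P * P * V := by
      simp only [Matrix.mul_assoc, hcancel]
    rw [hdiag] at this
    rw [this, Matrix.mul_assoc Vᴴ P P, hP2, hdiag]
  have hev01 : ∀ i, ev i = 0 ∨ ev i = 1 := by
    intro i
    have h := congrFun (congrFun hDD i) i
    simp only [Matrix.diagonal_mul_diagonal, Matrix.diagonal_apply_eq, Pi.mul_apply,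
      Function.comp_apply] at h
    have h2 : (ev i) * (ev i) = ev i := by exact_mod_cast h
    have h3 : ev i * (ev i - 1) = 0 := by nlinarith
    rcases mul_eq_zero.mp h3 with h0 | h1
    · exact Or.inl h0
    · exact Or.inr (by linarith)
  -- the isometry
  set m : ℕ := Fintype.card {i // ev i = 1} with hm
  set e : Fin m ≃ {i // ev i = 1} := (Fintype.equivFin {i // ev i = 1}).symm with he
  refine ⟨m, Matrix.of fun i k => V i (e k), ?_, ?_, ?_⟩
  · ext k k'
    have h4 : (Vᴴ * V) ((e k : Fin n)) ((e k' : Fin n))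
        = ∑ i, star (V i (e k)) * V i (e k') := by
      simp [Matrix.mul_apply, Matrix.conjTranspose_apply]
    rw [hVV] at h4
    simp only [Matrix.mul_apply, Matrix.conjTranspose_apply, Matrix.of_apply]
    rw [← h4]
    simp [Matrix.one_apply, Subtype.coe_inj]
  · ext a b
    have hPab : P a b = ∑ i, V a i * (ev i : ℂ) * star (V b i) := by
      rw [hspec]
      simp [Matrix.mul_apply, Matrix.conjTranspose_apply, Matrix.diagonal_apply,
        mul_ite, mul_zero, ite_mul, zero_mul, Finset.sum_ite_eq, Finset.sum_ite_eq']
    rw [hPab]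
    simp only [Matrix.mul_apply, Matrix.conjTranspose_apply, Matrix.of_apply]
    rw [show (∑ i, V a i * (ev i : ℂ) * star (V b i))
        = ∑ i, (if ev i = 1 then V a i * star (V b i) else 0) from
      Finset.sum_congr rfl fun i _ => by
        rcases hev01 i with h0 | h0 <;> simp [h0]]
    rw [← Finset.sum_filter]
    rw [Finset.sum_subtype (p := fun i => ev i = 1)
      (Finset.univ.filter fun i => ev i = 1) (by simp) (fun i => V a i * star (V b i))]
    exact e.sum_comp (fun i => V a (i : Fin n) * star (V b (i : Fin n)))
  · -- trace
    have htr : P.trace = (Matrix.diagonal (Complex.ofReal ∘ ev)).trace := by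
      rw [hspec, Matrix.trace_mul_cycle, hVV, Matrix.one_mul]
    rw [htr, Matrix.trace_diagonal]
    have : ∀ i, (Complex.ofReal ∘ ev) i = if ev i = 1 then (1:ℂ) else 0 := by
      intro i; rcases hev01 i with h0 | h0 <;> simp [h0]
    rw [Finset.sum_congr rfl fun i _ => this i, Finset.sum_boole, hm,
      Fintype.card_subtype]

/-- If unitaries `M₁, M₂` on a finite-dimensional space satisfy `M_i^d = 1` and
`M₁M₂ = ω⁻¹ M₂M₁` for prime `d`, then the dimension is a multiple of `d` and there is a
unitary `U : H → ℂ^d ⊗ H'` with `U M₁ U† = X ⊗ 1` and `U M₂ U† = Z ⊗ 1`. -/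
theorem qudit_pair_self_testing (d n : ℕ) (hd : d.Prime) [NeZero d]
    (ω : ℂ) (hω : ω = Complex.exp (2 * Real.pi * Complex.I / d))
    (X Z : Matrix (Fin d) (Fin d) ℂ)
    (hX : X = Matrix.of fun i j => if i = j + 1 then 1 else 0)
    (hZ : Z = Matrix.diagonal fun j : Fin d => ω ^ (j : ℕ))
    (M₁ M₂ : Matrix (Fin n) (Fin n) ℂ)
    (h1U : M₁ ∈ Matrix.unitaryGroup (Fin n) ℂ)
    (h2U : M₂ ∈ Matrix.unitaryGroup (Fin n) ℂ)
    (h1d : M₁ ^ d = 1) (h2d : M₂ ^ d = 1)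
    (hcomm : M₁ * M₂ = ω⁻¹ • (M₂ * M₁)) :
    ∃ m : ℕ, n = d * m ∧
      ∃ U : Matrix (Fin d × Fin m) (Fin n) ℂ,
        U * Uᴴ = 1 ∧ Uᴴ * U = 1 ∧
        U * M₁ * Uᴴ = X ⊗ₖ (1 : Matrix (Fin m) (Fin m) ℂ) ∧
        U * M₂ * Uᴴ = Z ⊗ₖ (1 : Matrix (Fin m) (Fin m) ℂ) := by
  classical
  have hd0 : (d : ℂ) ≠ 0 := Nat.cast_ne_zero.mpr (NeZero.ne d)
  have hdpos : 0 < d := hd.pos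
  have hprim : IsPrimitiveRoot ω d := by
    rw [hω]; exact Complex.isPrimitiveRoot_exp d (NeZero.ne d)
  have hωd : ω ^ d = 1 := hprim.pow_eq_one
  have hω0 : ω ≠ 0 := by
    intro h; rw [h] at hωd; simp [zero_pow (NeZero.ne d)] at hωd
  have hωdvd : ∀ t : ℕ, ω ^ t = 1 ↔ d ∣ t := fun t => hprim.pow_eq_one_iff_dvd t
  -- unitarity facts
  have hM1s : M₁ᴴ * M₁ = 1 := by
    have := h1U.1; rwa [Matrix.star_eq_conjTranspose] at this
  have hM1s' : M₁ * M₁ᴴ = 1 := by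
    have := h1U.2; rwa [Matrix.star_eq_conjTranspose] at this
  have hM2s : M₂ᴴ * M₂ = 1 := by
    have := h2U.1; rwa [Matrix.star_eq_conjTranspose] at this
  have hU1 : ∀ j : ℕ, (M₁ ^ j)ᴴ * M₁ ^ j = 1 := by
    intro j
    have h := (pow_mem h1U j).1
    rwa [Matrix.star_eq_conjTranspose] at h
  have hU1' : ∀ j : ℕ, M₁ ^ j * (M₁ ^ j)ᴴ = 1 := by
    intro j
    have h := (pow_mem h1U j).2
    rwa [Matrix.star_eq_conjTranspose] at h
  have hd1 : d - 1 + 1 = d := Nat.succ_pred_eq_of_pos hdpos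
  have hM1H : M₁ᴴ = M₁ ^ (d - 1) := by
    have : M₁ᴴ * M₁ ^ d = M₁ ^ (d - 1) := by
      conv_lhs => rw [← hd1, pow_succ', ← Matrix.mul_assoc, hM1s, Matrix.one_mul]
    rwa [h1d, Matrix.mul_one] at this
  have hM2H : M₂ᴴ = M₂ ^ (d - 1) := by
    have : M₂ᴴ * M₂ ^ d = M₂ ^ (d - 1) := by
      conv_lhs => rw [← hd1, pow_succ', ← Matrix.mul_assoc, hM2s, Matrix.one_mul]
    rwa [h2d, Matrix.mul_one] at this
  have hjH : ∀ j : ℕ, (M₁ ^ j)ᴴ = M₁ ^ ((d - 1) * j) := by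
    intro j
    rw [Matrix.conjTranspose_pow, hM1H, ← pow_mul]
  -- commutation facts
  have hbase : M₂ * M₁ = ω • (M₁ * M₂) := by
    rw [hcomm, smul_smul, mul_inv_cancel₀ hω0, one_smul]
  have hswap1 : ∀ t : ℕ, M₁ ^ t * M₂ = (ω⁻¹) ^ t • (M₂ * M₁ ^ t) := by
    intro t
    induction t with
    | zero => simp
    | succ t ih =>
      rw [pow_succ', Matrix.mul_assoc, ih, Matrix.mul_smul, ← Matrix.mul_assoc, hcomm,
        Matrix.smul_mul, smul_smul, ← pow_succ, Matrix.mul_assoc]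
  have hswap : ∀ s t : ℕ, M₁ ^ t * M₂ ^ s = (ω⁻¹) ^ (s * t) • (M₂ ^ s * M₁ ^ t) := by
    intro s t
    induction s with
    | zero => simp
    | succ s ih =>
      rw [pow_succ (M₂), ← Matrix.mul_assoc, ih, Matrix.smul_mul, Matrix.mul_assoc,
        hswap1 t, Matrix.mul_smul, smul_smul, ← pow_add, Matrix.mul_assoc]
      ring_nf
  have hswap2 : ∀ t : ℕ, M₂ * M₁ ^ t = ω ^ t • (M₁ ^ t * M₂) := by
    intro t
    rw [hswap1 t, smul_smul, ← mul_pow, mul_inv_cancel₀ hω0, one_pow, one_smul]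
  -- the averaging projection
  set S : Matrix (Fin n) (Fin n) ℂ := ∑ t ∈ Finset.range d, M₂ ^ t with hS
  have hM2S : M₂ * S = S := by
    rw [hS, Finset.mul_sum]
    have h1 : ∀ t ∈ Finset.range d, M₂ * M₂ ^ t = M₂ ^ (t + 1) := by
      intro t _; rw [← pow_succ']
    rw [Finset.sum_congr rfl h1]
    have h2 : (∑ t ∈ Finset.range d, M₂ ^ (t + 1)) + M₂ ^ 0
        = (∑ t ∈ Finset.range d, M₂ ^ t) + M₂ ^ d := by
      rw [← Finset.sum_range_succ', Finset.sum_range_succ]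
    rw [pow_zero, h2d] at h2
    exact add_right_cancel h2
  have hSM : S * M₂ = S := by
    rw [hS, Finset.sum_mul]
    have h1 : ∀ t ∈ Finset.range d, M₂ ^ t * M₂ = M₂ ^ (t + 1) := by
      intro t _; rw [← pow_succ]
    rw [Finset.sum_congr rfl h1]
    have h2 : (∑ t ∈ Finset.range d, M₂ ^ (t + 1)) + M₂ ^ 0
        = (∑ t ∈ Finset.range d, M₂ ^ t) + M₂ ^ d := by
      rw [← Finset.sum_range_succ', Finset.sum_range_succ]
    rw [pow_zero, h2d] at h2
    exact add_right_cancel h2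
  have htS : ∀ t : ℕ, M₂ ^ t * S = S := by
    intro t
    induction t with
    | zero => simp
    | succ t ih => rw [pow_succ, Matrix.mul_assoc, hM2S, ih]
  have hSt : ∀ t : ℕ, S * M₂ ^ t = S := by
    intro t
    induction t with
    | zero => simp
    | succ t ih => rw [pow_succ, ← Matrix.mul_assoc, ih, hSM]
  have hSHt : ∀ t : ℕ, Sᴴ * M₂ ^ t = Sᴴ := by
    have h1 : Sᴴ * M₂ = Sᴴ := by
      have h2 : M₂ᴴ * S = S := by rw [hM2H, htS]
      have := congrArg Matrix.conjTranspose h2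
      rwa [Matrix.conjTranspose_mul, Matrix.conjTranspose_conjTranspose] at this
    intro t
    induction t with
    | zero => simp
    | succ t ih => rw [pow_succ, ← Matrix.mul_assoc, ih, h1]
  have hSHS : Sᴴ * S = (d : ℕ) • Sᴴ := by
    conv_lhs => rw [hS, Finset.mul_sum]
    rw [Finset.sum_congr rfl fun t _ => hSHt t, Finset.sum_const, Finset.card_range]
  have hSHS' : Sᴴ * S = (d : ℕ) • S := by
    have := congrArg Matrix.conjTranspose hSHS
    rwa [Matrix.conjTranspose_mul, Matrix.conjTranspose_conjTranspose,
      Matrix.conjTranspose_nsmul, Matrix.conjTranspose_conjTranspose] at this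
  have hSH : Sᴴ = S := by
    have h1 : (d : ℂ) • Sᴴ = (d : ℂ) • S := by
      rw [Nat.cast_smul_eq_nsmul, Nat.cast_smul_eq_nsmul, ← hSHS, ← hSHS']
    exact smul_right_injective _ hd0 h1
  have hSS : S * S = (d : ℕ) • S := by
    have h1 := hSHS'
    rwa [hSH] at h1
  obtain ⟨P, hP⟩ : ∃ P' : Matrix (Fin n) (Fin n) ℂ, P' = (d : ℂ)⁻¹ • S := ⟨_, rfl⟩
  have hPH : Pᴴ = P := by
    rw [hP, Matrix.conjTranspose_smul, hSH]
    congr 1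
    simp
  have hPP : P * P = P := by
    rw [hP, Matrix.smul_mul, Matrix.mul_smul, hSS, ← Nat.cast_smul_eq_nsmul ℂ,
      smul_smul, smul_smul]
    congr 1
    field_simp
  have hM2P : M₂ * P = P := by rw [hP, Matrix.mul_smul, hM2S]
  have hPM2 : P * M₂ = P := by rw [hP, Matrix.smul_mul, hSM]
  obtain ⟨m, W, hWW, hWWH, htrP⟩ := exists_factor P hPH hPP
  have hPW : P * W = W := by
    rw [← hWWH, Matrix.mul_assoc, hWW, Matrix.mul_one]
  have hWHP : Wᴴ * P = Wᴴ := by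
    have := congrArg Matrix.conjTranspose hPW
    rwa [Matrix.conjTranspose_mul, hPH] at this
  have hM2W : M₂ * W = W := by
    rw [← hPW, ← Matrix.mul_assoc, hM2P]
  -- vanishing lemma
  have hPM1P : ∀ t : ℕ, ¬ d ∣ t → P * (M₁ ^ t * P) = 0 := by
    intro t ht
    have hωt : ω ^ t ≠ 1 := fun h => ht ((hωdvd t).mp h)
    have e1 : P * (M₂ * M₁ ^ t * P) = P * (M₁ ^ t * P) := by
      rw [Matrix.mul_assoc M₂, ← Matrix.mul_assoc P M₂, hPM2]
    have e2 : P * (M₂ * M₁ ^ t * P) = ω ^ t • (P * (M₁ ^ t * P)) := by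
      rw [hswap2 t, Matrix.smul_mul, Matrix.mul_smul, Matrix.mul_assoc (M₁ ^ t) M₂ P,
        hM2P]
    have key : P * (M₁ ^ t * P) = ω ^ t • (P * (M₁ ^ t * P)) := e1.symm.trans e2
    have h2 : (1 - ω ^ t) • (P * (M₁ ^ t * P)) = 0 := by
      rw [sub_smul, one_smul]
      nth_rewrite 1 [key]
      exact sub_self _
    rcases smul_eq_zero.mp h2 with h | h
    · exact absurd (by linear_combination -h : ω ^ t = 1) hωt
    · exact h
  -- the key scalar-block lemma
  have hK : ∀ t : ℕ, Wᴴ * (M₁ ^ t * W) = if d ∣ t then (1 : Matrix (Fin m) (Fin m) ℂ) else 0 := by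
    intro t
    by_cases ht : d ∣ t
    · obtain ⟨c, rfl⟩ := ht
      rw [pow_mul, h1d, one_pow, Matrix.one_mul, hWW, if_pos ⟨c, rfl⟩]
    · rw [if_neg ht]
      calc Wᴴ * (M₁ ^ t * W) = (Wᴴ * P) * (M₁ ^ t * (P * W)) := by rw [hWHP, hPW]
        _ = Wᴴ * ((P * (M₁ ^ t * P)) * W) := by simp only [Matrix.mul_assoc]
        _ = 0 := by rw [hPM1P t ht, Matrix.zero_mul, Matrix.mul_zero]
  -- arithmetic helper
  have hnum : ∀ a c : ℕ, a < d → (d ∣ ((d - 1) * a + c) ↔ a = c % d) := by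
    intro a c ha
    have hcast : (((d - 1) * a + c : ℕ) : ZMod d) = (c : ZMod d) - (a : ZMod d) := by
      push_cast [Nat.cast_sub hd.one_le]
      rw [ZMod.natCast_self]
      ring
    rw [← ZMod.natCast_eq_zero_iff, hcast, sub_eq_zero]
    constructor
    · intro h
      have := congrArg ZMod.val h
      rw [ZMod.val_natCast, ZMod.val_cast_of_lt ha] at this
      exact this.symm
    · intro h
      rw [h, ZMod.natCast_mod]
  -- the unitary
  obtain ⟨C, hC⟩ : ∃ C' : Fin d → Matrix (Fin n) (Fin m) ℂ,
      C' = fun (j : Fin d) => M₁ ^ ((j : ℕ)) * W := ⟨fun (j : Fin d) => M₁ ^ ((j : ℕ)) * W, rfl⟩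
  obtain ⟨B, hB⟩ : ∃ B' : Matrix (Fin n) (Fin d × Fin m) ℂ,
      B' = Matrix.of fun i p => C p.1 i p.2 := ⟨_, rfl⟩
  have hblk : ∀ (A : Matrix (Fin n) (Fin n) ℂ) (p q : Fin d × Fin m),
      (Bᴴ * A * B) p q
        = ((C p.1)ᴴ * (A * C q.1)) p.2 q.2 := by
    intro A p q
    simp only [hB, Matrix.mul_apply, Matrix.conjTranspose_apply, Matrix.of_apply,
      Finset.sum_mul, Finset.mul_sum, mul_assoc]
    exact Finset.sum_comm
  have hcblock : ∀ (j j' : Fin d),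
      (C j)ᴴ * (C j')
        = if d ∣ ((d - 1) * (j : ℕ) + (j' : ℕ)) then (1 : Matrix (Fin m) (Fin m) ℂ)
          else 0 := by
    intro j j'
    rw [hC]
    rw [Matrix.conjTranspose_mul, hjH, Matrix.mul_assoc, ← Matrix.mul_assoc (M₁ ^ ((d-1) * (j:ℕ))),
      ← pow_add, ← hK]
  have hBB : Bᴴ * B = 1 := by
    ext p q
    have h1 : Bᴴ * B = Bᴴ * (1 : Matrix (Fin n) (Fin n) ℂ) * B := by rw [Matrix.mul_one]
    rw [h1, hblk 1 p q, Matrix.one_mul, hcblock]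
    obtain ⟨j, k⟩ := p
    obtain ⟨j', k'⟩ := q
    have hiff : d ∣ ((d - 1) * (j : ℕ) + (j' : ℕ)) ↔ j = j' := by
      rw [hnum _ _ j.isLt, Nat.mod_eq_of_lt j'.isLt, Fin.ext_iff]
    by_cases hjj : j = j'
    · rw [if_pos (hiff.mpr hjj)]
      simp [Matrix.one_apply, Prod.ext_iff, hjj]
    · rw [if_neg (fun h => hjj (hiff.mp h))]
      simp [Matrix.one_apply, Prod.ext_iff, hjj]
  -- value of (1 : Fin d)
  have h1v : ((1 : Fin d) : ℕ) = 1 := by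
    rw [Fin.val_one']
    exact Nat.mod_eq_of_lt hd.two_le
  -- X block
  have hXblk : Bᴴ * M₁ * B = X ⊗ₖ (1 : Matrix (Fin m) (Fin m) ℂ) := by
    ext p q
    rw [hblk M₁ p q]
    obtain ⟨j, k⟩ := p
    obtain ⟨j', k'⟩ := q
    have e1 : M₁ * C j' = M₁ ^ ((j' : ℕ) + 1) * W := by
      rw [hC, ← Matrix.mul_assoc, ← pow_succ']
    have e2 : (C j)ᴴ * (M₁ * C j')
        = if d ∣ ((d - 1) * (j : ℕ) + ((j' : ℕ) + 1)) then (1 : Matrix (Fin m) (Fin m) ℂ)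
          else 0 := by
      rw [e1, hC, Matrix.conjTranspose_mul, hjH, Matrix.mul_assoc,
        ← Matrix.mul_assoc (M₁ ^ ((d - 1) * (j : ℕ))), ← pow_add, ← hK]
    have hiff : d ∣ ((d - 1) * (j : ℕ) + ((j' : ℕ) + 1)) ↔ j = j' + 1 := by
      rw [hnum _ _ j.isLt, Fin.ext_iff, Fin.val_add, h1v]
    rw [e2, hX]
    simp only [Matrix.kroneckerMap_apply, Matrix.of_apply]
    by_cases hjj : j = j' + 1
    · rw [if_pos (hiff.mpr hjj), if_pos hjj, one_mul]
    · rw [if_neg (fun h => hjj (hiff.mp h)), if_neg hjj, zero_mul, Matrix.zero_apply]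
  -- Z block
  have hZblk : Bᴴ * M₂ * B = Z ⊗ₖ (1 : Matrix (Fin m) (Fin m) ℂ) := by
    ext p q
    rw [hblk M₂ p q]
    obtain ⟨j, k⟩ := p
    obtain ⟨j', k'⟩ := q
    have e1 : M₂ * C j' = ω ^ (j' : ℕ) • C j' := by
      rw [hC, ← Matrix.mul_assoc, hswap2, Matrix.smul_mul, Matrix.mul_assoc, hM2W]
    have e2 : (C j)ᴴ * (M₂ * C j') = ω ^ (j' : ℕ) • ((C j)ᴴ * C j') := by
      rw [e1, Matrix.mul_smul]
    rw [e2, hcblock, hZ]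
    have hiff : d ∣ ((d - 1) * (j : ℕ) + (j' : ℕ)) ↔ j = j' := by
      rw [hnum _ _ j.isLt, Nat.mod_eq_of_lt j'.isLt, Fin.ext_iff]
    simp only [Matrix.kroneckerMap_apply, Matrix.smul_apply]
    by_cases hjj : j = j'
    · subst hjj
      rw [if_pos (hiff.mpr rfl), Matrix.diagonal_apply_eq, smul_eq_mul]
    · rw [if_neg (fun h => hjj (hiff.mp h)), Matrix.diagonal_apply_ne _ hjj,
        Matrix.zero_apply, smul_zero, zero_mul]
  -- completeness of the projections
  have hconj : ∀ (j t : ℕ), M₁ ^ j * (M₂ ^ t * (M₁ ^ j)ᴴ) = (ω⁻¹) ^ (t * j) • M₂ ^ t := by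
    intro j t
    rw [← Matrix.mul_assoc, hswap t j, Matrix.smul_mul, Matrix.mul_assoc, hU1',
      Matrix.mul_one]
  have hCC : ∀ j : Fin d, C j * (C j)ᴴ
      = (d : ℂ)⁻¹ • ∑ t ∈ Finset.range d, (ω⁻¹) ^ (t * (j : ℕ)) • M₂ ^ t := by
    intro j
    rw [hC]
    have e1 : M₁ ^ (j : ℕ) * W * (M₁ ^ (j : ℕ) * W)ᴴ
        = M₁ ^ (j : ℕ) * (P * (M₁ ^ (j : ℕ))ᴴ) := by
      rw [Matrix.conjTranspose_mul, ← hWWH]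
      simp only [Matrix.mul_assoc]
    rw [e1, hP, Matrix.smul_mul, Matrix.mul_smul, Matrix.sum_mul, Finset.mul_sum]
    congr 1
    exact Finset.sum_congr rfl fun t _ => hconj (j : ℕ) t
  have hgeom : ∀ t ∈ Finset.range d,
      (∑ j ∈ Finset.range d, ((ω⁻¹) ^ t) ^ j) = if t = 0 then (d : ℂ) else 0 := by
    intro t ht
    by_cases ht0 : t = 0
    · simp [ht0]
    · rw [if_neg ht0]
      have hζ1 : (ω⁻¹) ^ t ≠ 1 := by
        rw [inv_pow]
        intro h
        have h' : ω ^ t = 1 := by rw [← inv_inv (ω ^ t), h, inv_one]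
        rcases (hωdvd t).mp h' with ⟨c, rfl⟩
        rcases Nat.eq_zero_or_pos c with rfl | hc
        · exact ht0 (by ring)
        · have := Finset.mem_range.mp ht
          nlinarith
      have hζd : ((ω⁻¹) ^ t) ^ d = 1 := by
        rw [← pow_mul, mul_comm t d, pow_mul, inv_pow, hωd, inv_one, one_pow]
      rw [geom_sum_eq hζ1, hζd, sub_self, zero_div]
  have hsum : ∑ j : Fin d, C j * (C j)ᴴ = 1 := by
    rw [Finset.sum_congr rfl fun j _ => hCC j, ← Finset.smul_sum]
    rw [Fin.sum_univ_eq_sum_range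
      (fun j => ∑ t ∈ Finset.range d, (ω⁻¹) ^ (t * j) • M₂ ^ t) d]
    rw [Finset.sum_comm]
    have e1 : ∀ t ∈ Finset.range d,
        (∑ j ∈ Finset.range d, (ω⁻¹) ^ (t * j) • M₂ ^ t)
          = (if t = 0 then (d : ℂ) else 0) • M₂ ^ t := by
      intro t ht
      rw [← Finset.sum_smul, ← hgeom t ht]
      congr 1
      exact Finset.sum_congr rfl fun j _ => by rw [pow_mul]
    rw [Finset.sum_congr rfl e1, Finset.sum_eq_single_of_mem 0 (Finset.mem_range.mpr hdpos)
      (fun t _ ht0 => by rw [if_neg ht0, zero_smul])]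
    rw [if_pos rfl, pow_zero, smul_smul, inv_mul_cancel₀ hd0, one_smul]
  have hBBH : B * Bᴴ = 1 := by
    have step1 : B * Bᴴ = ∑ j : Fin d, C j * (C j)ᴴ := by
      ext i i'
      simp only [Matrix.mul_apply, Matrix.conjTranspose_apply, hB, Matrix.of_apply,
        Matrix.sum_apply]
      rw [Fintype.sum_prod_type]
    rw [step1, hsum]
  -- dimension count
  have hnm : n = d * m := by
    have h1 : ((1 : Matrix (Fin n) (Fin n) ℂ)).trace = (n : ℂ) := by
      simp [Matrix.trace_one]
    have h2 : (∑ j : Fin d, C j * (C j)ᴴ).trace = (d : ℂ) * (m : ℂ) := by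
      rw [Matrix.trace_sum]
      have e1 : ∀ j : Fin d, (C j * (C j)ᴴ).trace = (m : ℂ) := by
        intro j
        rw [Matrix.trace_mul_comm, hcblock j j,
          if_pos ((hnum _ _ j.isLt).mpr (Nat.mod_eq_of_lt j.isLt).symm), Matrix.trace_one]
        simp
      rw [Finset.sum_congr rfl fun j _ => e1 j, Finset.sum_const, Finset.card_univ,
        Fintype.card_fin, nsmul_eq_mul]
    have h3 : (n : ℂ) = ((d * m : ℕ) : ℂ) := by
      rw [← h1, ← hsum, h2]
      push_cast
      ring
    exact_mod_cast h3
  refine ⟨m, hnm, Bᴴ, ?_, ?_, ?_, ?_⟩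
  · rw [Matrix.conjTranspose_conjTranspose]
    exact hBB
  · rw [Matrix.conjTranspose_conjTranspose]
    exact hBBH
  · rw [Matrix.conjTranspose_conjTranspose]
    exact hXblk
  · rw [Matrix.conjTranspose_conjTranspose]
    exact hZblk
end

section
/- The maximum of (1/√d) |a₀| Σ_{i=0}^{d-1} |a_i| over complex vectors (a₀,…,a_{d-1}) with Σ_i |a_i|² = 1 equals (1 + 1/√d)/2. -/
/-- The maximum of `(1/√d) |a₀| Σ_i |a_i|` over unit vectors `(a₀,…,a_{d-1}) ∈ ℂ^d`
equals `(1 + 1/√d)/2`. -/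
theorem max_weighted_sum (d : ℕ) (hd : 1 ≤ d) :
    IsGreatest
      {x : ℝ | ∃ a : Fin d → ℂ, (∑ i, ‖a i‖ ^ 2) = 1 ∧
        x = (1 / Real.sqrt d) * ‖a ⟨0, hd⟩‖ * ∑ i, ‖a i‖}
      ((1 + 1 / Real.sqrt d) / 2) := by
  set i0 : Fin d := ⟨0, hd⟩ with hi0
  have hD1 : (1:ℝ) ≤ (d:ℝ) := by exact_mod_cast hd
  have hD0 : (0:ℝ) ≤ (d:ℝ) := by linarith
  have hsd : (1:ℝ) ≤ Real.sqrt d := by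
    rw [show (1:ℝ) = Real.sqrt 1 by simp]
    exact Real.sqrt_le_sqrt hD1
  have hsd0 : (0:ℝ) < Real.sqrt d := by linarith
  obtain ⟨u, hu⟩ : ∃ u : ℝ, u = 1 / Real.sqrt (d:ℝ) := ⟨_, rfl⟩
  rw [← hu]
  have hu0 : 0 < u := by rw [hu]; positivity
  have hu1 : u ≤ 1 := by rw [hu, div_le_one hsd0]; exact hsd
  have hu2 : u ^ 2 * (d:ℝ) = 1 := by
    rw [hu, div_pow, one_pow, Real.sq_sqrt hD0]
    field_simp
  have hcard : (((Finset.univ : Finset (Fin d)).erase i0).card : ℝ) = (d:ℝ) - 1 := by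
    rw [Finset.card_erase_of_mem (Finset.mem_univ i0), Finset.card_univ, Fintype.card_fin,
      Nat.cast_sub hd]
    simp
  have hsum : ∀ (x y : ℝ), (∑ i : Fin d, (if i = i0 then x else y))
      = x + ((d:ℝ) - 1) * y := by
    intro x y
    rw [← Finset.add_sum_erase _ _ (Finset.mem_univ i0), if_pos rfl]
    congr 1
    rw [Finset.sum_congr rfl (fun i hi => if_neg (Finset.ne_of_mem_erase hi)),
      Finset.sum_const, nsmul_eq_mul, hcard]
  constructor
  · -- membership
    rcases eq_or_lt_of_le hd with hd1 | hd2
    · -- d = 1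
      have hD : ((d:ℝ)) = 1 := by exact_mod_cast hd1.symm
      have hu' : u = 1 := by rw [hu, hD, Real.sqrt_one]; norm_num
      refine ⟨fun _ => 1, ?_, ?_⟩
      · simp [← hd1]
      · simp only [Set.mem_setOf_eq, ← hd1]
        simp
        rw [hu']
        norm_num
        exact_mod_cast hd1
    · -- d ≥ 2
      have hD2 : (1:ℝ) < (d:ℝ) := by exact_mod_cast hd2
      have hD1' : (0:ℝ) < (d:ℝ) - 1 := by linarith
      obtain ⟨c, hc⟩ : ∃ c : ℝ, c = Real.sqrt ((1 + u) / 2) := ⟨_, rfl⟩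
      obtain ⟨s, hs⟩ : ∃ s : ℝ, s = Real.sqrt ((1 - u) / (2 * ((d:ℝ) - 1))) := ⟨_, rfl⟩
      have hc0 : 0 ≤ c := hc ▸ Real.sqrt_nonneg _
      have hs0 : 0 ≤ s := hs ▸ Real.sqrt_nonneg _
      have hc2 : c ^ 2 = (1 + u) / 2 := by rw [hc]; exact Real.sq_sqrt (by linarith)
      have hs2 : s ^ 2 = (1 - u) / (2 * ((d:ℝ) - 1)) := by
        rw [hs]; exact Real.sq_sqrt (div_nonneg (by linarith) (by linarith))
      have hcs : c * s = u / 2 := by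
        rw [hc, hs, ← Real.sqrt_mul (by linarith)]
        rw [show (1 + u) / 2 * ((1 - u) / (2 * ((d:ℝ) - 1))) = (u / 2) ^ 2 by
          field_simp
          linear_combination (-1 : ℝ) * hu2]
        exact Real.sqrt_sq (by linarith)
      refine ⟨fun i => if i = i0 then (c:ℂ) else (s:ℂ), ?_, ?_⟩
      · have hn : ∀ i : Fin d, ‖(if i = i0 then (c:ℂ) else (s:ℂ))‖ ^ 2
            = if i = i0 then c ^ 2 else s ^ 2 := by
          intro i
          split <;> simp [abs_of_nonneg hc0, abs_of_nonneg hs0]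
        rw [Finset.sum_congr rfl fun i _ => hn i, hsum, hc2, hs2]
        field_simp
        ring
      · have hn : ∀ i : Fin d, ‖(if i = i0 then (c:ℂ) else (s:ℂ))‖
            = if i = i0 then c else s := by
          intro i
          split <;> simp [abs_of_nonneg hc0, abs_of_nonneg hs0]
        rw [Finset.sum_congr rfl fun i _ => hn i, hsum, hn i0, if_pos rfl]
        linear_combination (-u) * hc2 + (-(((d:ℝ) - 1) * u)) * hcs + (-(1/2 : ℝ)) * hu2
  · -- upper bound
    rintro x ⟨a, ha1, rfl⟩
    obtain ⟨t, ht⟩ : ∃ t : ℝ, t = ‖a i0‖ := ⟨_, rfl⟩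
    obtain ⟨R, hR⟩ : ∃ R : ℝ, R = ∑ i ∈ Finset.univ.erase i0, ‖a i‖ := ⟨_, rfl⟩
    obtain ⟨Q, hQ⟩ : ∃ Q : ℝ, Q = ∑ i ∈ Finset.univ.erase i0, ‖a i‖ ^ 2 := ⟨_, rfl⟩
    rw [← ht]
    have hsplit : (∑ i, ‖a i‖) = t + R := by
      rw [ht, hR]
      exact (Finset.add_sum_erase _ (fun i => ‖a i‖) (Finset.mem_univ i0)).symm
    have hQsplit : t ^ 2 + Q = 1 := by
      rw [ht, hQ, ← ha1]
      exact Finset.add_sum_erase _ (fun i => ‖a i‖ ^ 2) (Finset.mem_univ i0)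
    have ht0 : 0 ≤ t := ht ▸ norm_nonneg _
    have hR0 : 0 ≤ R := hR ▸ Finset.sum_nonneg fun i _ => norm_nonneg _
    have hQ0 : 0 ≤ Q := hQ ▸ Finset.sum_nonneg fun i _ => sq_nonneg _
    have hQe : Q = 1 - t ^ 2 := by linarith
    have hCS : R ^ 2 ≤ ((d:ℝ) - 1) * Q := by
      rw [hR, hQ, ← hcard]
      exact_mod_cast sq_sum_le_card_mul_sum_sq (s := Finset.univ.erase i0)
        (f := fun i => ‖a i‖)
    have h4 : 4 * u ^ 2 * t ^ 2 * R ^ 2 ≤ 4 * u ^ 2 * t ^ 2 * (((d:ℝ) - 1) * Q) :=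
      mul_le_mul_of_nonneg_left hCS (by positivity)
    have h4' : (2 * u * t * R) ^ 2 ≤ 4 * u ^ 2 * t ^ 2 * (((d:ℝ) - 1) * (1 - t ^ 2)) := by
      calc (2 * u * t * R) ^ 2 = 4 * u ^ 2 * t ^ 2 * R ^ 2 := by ring
        _ ≤ 4 * u ^ 2 * t ^ 2 * (((d:ℝ) - 1) * Q) := h4
        _ = 4 * u ^ 2 * t ^ 2 * (((d:ℝ) - 1) * (1 - t ^ 2)) := by rw [hQe]
    have hid : (1 + u - 2 * u * t ^ 2) ^ 2
        - 4 * u ^ 2 * t ^ 2 * (((d:ℝ) - 1) * (1 - t ^ 2))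
        = (1 + u - 2 * t ^ 2) ^ 2 := by
      linear_combination (-(4 * t ^ 2 * (1 - t ^ 2))) * hu2
    have key : (2 * u * t * R) ^ 2 ≤ (1 + u - 2 * u * t ^ 2) ^ 2 := by
      linarith [h4', hid, sq_nonneg (1 + u - 2 * t ^ 2)]
    have h5 : u * t ^ 2 + u * Q = u := by linear_combination u * hQsplit
    have hB : 0 ≤ 1 + u - 2 * u * t ^ 2 := by
      linarith [h5, mul_nonneg hu0.le hQ0, hu1]
    have hB2 : 0 ≤ 2 * u * t * R := by positivity
    have h1 : 2 * u * t * R ≤ 1 + u - 2 * u * t ^ 2 :=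
      le_of_pow_le_pow_left₀ two_ne_zero hB key
    rw [hsplit, show u * t * (t + R) = u * t ^ 2 + u * t * R from by ring]
    linarith [h1]
end
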